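/- Let M_k and V_k be defined by M₀ = 0, M₁ = 0^{a₁−1}1, M_{k} = M_{k−1}^{a_k} M_{k−2}, and V_{−1}=1, V₀=0, V₁ = 0^{a₁−b₁−1}10^{b₁}, V_{k+1} = V_k^{a_{k+1}−b_{k+1}} V_{k−1} V_k^{b_{k+1}}, under the Ostrowski digit rules for (b_k). Set t_k = b₁ + b₂q₁ + ⋯ + b_k q_{k−1} and r_k = q_k − t_k. Then for every k ≥ 1, V_k = R_k T_k and M_k = T_k R_k, where T_k is the prefix of M_k of length t_k and R_k is the suffix of M_k of length r_k. In particular, V_k is a conjugate (cyclic shift) of M_k. -/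

import Mathlib

/-- `m`-fold concatenation of a word. -/
def wpow (W : List ℕ) : ℕ → List ℕ
  | 0 => []
  | n + 1 => W ++ wpow W n

/-!
Write `T_k = M_{k-1}^{b_k} ⋯ M_1^{b_2} M_0^{b_1}`, a word of length `t_k`. By induction on `k`,
`M_k = T_k R_k` and `V_k = R_k T_k` for some `R_k`. Cutting `M = T R` and `V = R T` gives
`M T = T V`, hence `M^n T = T V^n`; applied to the cuts at levels `k` and `k - 1`, these
commutations turn the recursion for `V_{k+1}` into that of `M_{k+1}` rotated by
`T_{k+1} = M_k^{b_{k+1}} T_k`. When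
`b_{k+1} = a_{k+1}` the Ostrowski rule forces `b_k = 0`, so `T_k = T_{k-1}` and the previous
cut `M_{k-1} = T_k R_{k-1}` can be used instead.
-/

theorem wpow_add (W : List ℕ) (m n : ℕ) : wpow W (m + n) = wpow W m ++ wpow W n := by
  induction m with
  | zero => simp [wpow]
  | succ m ih => rw [Nat.add_right_comm]; simp [wpow, ih]

theorem length_wpow (W : List ℕ) (n : ℕ) : (wpow W n).length = n * W.length := by
  induction n with
  | zero => simp [wpow]
  | succ n ih => simp [wpow, ih, Nat.succ_mul, Nat.add_comm]

theorem wpow_append_of_append_eq {X Y T : List ℕ} (h : X ++ T = T ++ Y) (n : ℕ) :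
    wpow X n ++ T = T ++ wpow Y n := by
  induction n with
  | zero => simp [wpow]
  | succ n ih => rw [wpow, wpow, List.append_assoc, ih, ← List.append_assoc, h, List.append_assoc]

def ConjugateVia (T M V : List ℕ) : Prop :=
  ∃ R, M = T ++ R ∧ V = R ++ T

namespace ConjugateVia

variable {T M V : List ℕ}

theorem append_eq (h : ConjugateVia T M V) : M ++ T = T ++ V := by
  obtain ⟨R, rfl, rfl⟩ := h
  simp

theorem wpow_append_eq (h : ConjugateVia T M V) (n : ℕ) :
    M ++ (wpow M n ++ T) = (wpow M n ++ T) ++ V := by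
  rw [← List.append_assoc, ← wpow_append_of_append_eq rfl n, List.append_assoc, h.append_eq,
    List.append_assoc]

theorem wpow_add_succ {M' V' : List ℕ} (h : ConjugateVia T M V) (h' : M' ++ T = T ++ V')
    (b c : ℕ) :
    ConjugateVia (wpow M b ++ T) (wpow M (b + (c + 1)) ++ M')
      (wpow V (c + 1) ++ V' ++ wpow V b) := by
  have hMT := h.append_eq
  obtain ⟨R, hM, hV⟩ := h
  refine ⟨R ++ wpow M c ++ M', by rw [wpow_add, wpow, hM]; simp, ?_⟩
  calc wpow V (c + 1) ++ V' ++ wpow V b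
      = R ++ (T ++ wpow V c) ++ V' ++ wpow V b := by rw [wpow, hV]; simp
    _ = R ++ wpow M c ++ (T ++ V') ++ wpow V b := by
        rw [← wpow_append_of_append_eq hMT]; simp
    _ = R ++ wpow M c ++ M' ++ (wpow M b ++ T) := by
        rw [← h', wpow_append_of_append_eq hMT]; simp

theorem wpow_append {M' V' : List ℕ} (h : ConjugateVia T M V) (h' : ConjugateVia T M' V')
    (n : ℕ) : ConjugateVia (wpow M n ++ T) (wpow M n ++ M') (V' ++ wpow V n) := by
  obtain ⟨R', rfl, rfl⟩ := h'
  refine ⟨R', by simp, ?_⟩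
  rw [List.append_assoc, ← wpow_append_of_append_eq h.append_eq]

end ConjugateVia

def ostrowskiPrefix (b : ℕ → ℕ) (M : ℕ → List ℕ) : ℕ → List ℕ
  | 0 => []
  | k + 1 => wpow (M k) (b (k + 1)) ++ ostrowskiPrefix b M k

theorem ostrowskiPrefix_succ (b : ℕ → ℕ) (M : ℕ → List ℕ) (k : ℕ) :
    ostrowskiPrefix b M (k + 1) = wpow (M k) (b (k + 1)) ++ ostrowskiPrefix b M k :=
  rfl

theorem length_ostrowskiPrefix {b q : ℕ → ℕ} {M : ℕ → List ℕ}
    (hM : ∀ k, (M k).length = q k) (k : ℕ) :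
    (ostrowskiPrefix b M k).length = ∑ j ∈ Finset.range k, b (j + 1) * q j := by
  induction k with
  | zero => simp [ostrowskiPrefix]
  | succ k ih => simp [ostrowskiPrefix, Finset.sum_range_succ, length_wpow, hM, ih, Nat.add_comm]

theorem conjugateVia_ostrowskiPrefix_add_two {a b : ℕ → ℕ} {M V : ℕ → List ℕ} {k : ℕ}
    (hab : b (k + 2) ≤ a (k + 2)) (hrule : b (k + 2) = a (k + 2) → b (k + 1) = 0)
    (hM : M (k + 2) = wpow (M (k + 1)) (a (k + 2)) ++ M k)
    (hV : V (k + 2) =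
      wpow (V (k + 1)) (a (k + 2) - b (k + 2)) ++ V k ++ wpow (V (k + 1)) (b (k + 2)))
    (h₀ : ConjugateVia (ostrowskiPrefix b M k) (M k) (V k))
    (h₁ : ConjugateVia (ostrowskiPrefix b M (k + 1)) (M (k + 1)) (V (k + 1))) :
    ConjugateVia (ostrowskiPrefix b M (k + 2)) (M (k + 2)) (V (k + 2)) := by
  rcases hab.lt_or_eq with hlt | heq
  · obtain ⟨c, hc⟩ : ∃ c, a (k + 2) = b (k + 2) + (c + 1) := ⟨a (k + 2) - b (k + 2) - 1, by omega⟩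
    rw [hM, hV, hc, Nat.add_sub_cancel_left]
    exact h₁.wpow_add_succ (h₀.wpow_append_eq (b (k + 1))) _ _
  · have hT : ostrowskiPrefix b M (k + 1) = ostrowskiPrefix b M k := by
      simp [ostrowskiPrefix, hrule heq, wpow]
    rw [hM, hV, ostrowskiPrefix_succ, heq, Nat.sub_self, hT]
    rw [hT] at h₁
    simpa [wpow] using h₁.wpow_append h₀ (a (k + 2))

theorem length_eq_denominator (a q : ℕ → ℕ) (ha1 : 1 ≤ a 1) (hq0 : q 0 = 1) (hq1 : q 1 = a 1)
    (hq : ∀ k : ℕ, 1 ≤ k → q (k + 1) = a (k + 1) * q k + q (k - 1))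
    (M : ℕ → List ℕ) (hM0 : M 0 = [0]) (hM1 : M 1 = wpow [0] (a 1 - 1) ++ [1])
    (hM : ∀ k : ℕ, 1 ≤ k → M (k + 1) = wpow (M k) (a (k + 1)) ++ M (k - 1)) :
    ∀ k, (M k).length = q k := by
  refine Nat.twoStepInduction (by simp [hM0, hq0]) ?_ fun k h₀ h₁ => ?_
  · simp only [hM1, List.length_append, length_wpow, List.length_cons, List.length_nil, zero_add,
      mul_one, hq1]
    omega
  · rw [hM (k + 1) k.succ_pos, hq (k + 1) k.succ_pos]
    simp [length_wpow, h₀, h₁]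

theorem conjugateVia_ostrowskiPrefix (a b : ℕ → ℕ) (hb1 : b 1 ≤ a 1 - 1)
    (hb : ∀ k : ℕ, 2 ≤ k → b k ≤ a k)
    (hrule : ∀ k : ℕ, 1 ≤ k → b (k + 1) = a (k + 1) → b k = 0)
    (M : ℕ → List ℕ) (hM0 : M 0 = [0]) (hM1 : M 1 = wpow [0] (a 1 - 1) ++ [1])
    (hM : ∀ k : ℕ, 1 ≤ k → M (k + 1) = wpow (M k) (a (k + 1)) ++ M (k - 1))
    (V : ℕ → List ℕ) (hV0 : V 0 = [0])
    (hV1 : V 1 = wpow [0] (a 1 - b 1 - 1) ++ [1] ++ wpow [0] (b 1))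
    (hV : ∀ k : ℕ, 1 ≤ k →
      V (k + 1) = wpow (V k) (a (k + 1) - b (k + 1)) ++ V (k - 1) ++ wpow (V k) (b (k + 1))) :
    ∀ k, ConjugateVia (ostrowskiPrefix b M k) (M k) (V k) := by
  refine Nat.twoStepInduction ⟨[0], by simp [ostrowskiPrefix, hM0, hV0]⟩ ?_ fun k h₀ h₁ => ?_
  · have hT1 : ostrowskiPrefix b M 1 = wpow [0] (b 1) := by simp [ostrowskiPrefix, hM0]
    refine ⟨wpow [0] (a 1 - 1 - b 1) ++ [1], ?_, ?_⟩
    · rw [hM1, hT1, ← List.append_assoc, ← wpow_add, Nat.add_sub_of_le hb1]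
    · rw [hV1, hT1, Nat.sub_right_comm]
  · exact conjugateVia_ostrowskiPrefix_add_two (hb (k + 2) (by omega))
      (hrule (k + 1) k.succ_pos) (hM (k + 1) k.succ_pos) (hV (k + 1) k.succ_pos) h₀ h₁

/-- For `k ≥ 1`, `V_k = R_k T_k` and `M_k = T_k R_k`, where `T_k` is the prefix of
`M_k` of length `t_k = b₁ + b₂q₁ + ⋯ + b_k q_{k−1}` and `R_k` is the suffix of `M_k`
of length `r_k = q_k − t_k`; in particular `V_k` is a conjugate of `M_k`. -/
theorem V_conjugate_of_M (a b : ℕ → ℕ) (ha : ∀ k : ℕ, 1 ≤ k → 1 ≤ a k)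
    (hb1 : b 1 ≤ a 1 - 1) (hb : ∀ k : ℕ, 2 ≤ k → b k ≤ a k)
    (hrule : ∀ k : ℕ, 1 ≤ k → b (k + 1) = a (k + 1) → b k = 0)
    (q : ℕ → ℕ) (hq0 : q 0 = 1) (hq1 : q 1 = a 1)
    (hq : ∀ k : ℕ, 1 ≤ k → q (k + 1) = a (k + 1) * q k + q (k - 1))
    (M : ℕ → List ℕ) (hM0 : M 0 = [0])
    (hM1 : M 1 = wpow [0] (a 1 - 1) ++ [1])
    (hM : ∀ k : ℕ, 1 ≤ k → M (k + 1) = wpow (M k) (a (k + 1)) ++ M (k - 1))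
    (V : ℕ → List ℕ) (hV0 : V 0 = [0])
    (hV1 : V 1 = wpow [0] (a 1 - b 1 - 1) ++ [1] ++ wpow [0] (b 1))
    (hV : ∀ k : ℕ, 1 ≤ k →
      V (k + 1) = wpow (V k) (a (k + 1) - b (k + 1)) ++ V (k - 1) ++ wpow (V k) (b (k + 1)))
    (t : ℕ → ℕ) (ht : ∀ k : ℕ, t k = ∑ j ∈ Finset.range k, b (j + 1) * q j) :
    ∀ k : ℕ, 1 ≤ k →
      V k = (M k).drop (t k) ++ (M k).take (t k) ∧
      M k = (M k).take (t k) ++ (M k).drop (t k) ∧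
      ((M k).take (t k)).length = t k ∧
      ((M k).drop (t k)).length = q k - t k := by
  intro k _
  have hlen := length_eq_denominator a q (ha 1 le_rfl) hq0 hq1 hq M hM0 hM1 hM
  have hT : (ostrowskiPrefix b M k).length = t k := by rw [ht, length_ostrowskiPrefix hlen]
  obtain ⟨R, hMk, hVk⟩ :=
    conjugateVia_ostrowskiPrefix a b hb1 hb hrule M hM0 hM1 hM V hV0 hV1 hV k
  have htake : (M k).take (t k) = ostrowskiPrefix b M k := by rw [hMk, List.take_left' hT]
  have hdrop : (M k).drop (t k) = R := by rw [hMk, List.drop_left' hT]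
  refine ⟨by rw [htake, hdrop, hVk], (List.take_append_drop _ _).symm, by rw [htake, hT], ?_⟩
  rw [hdrop, ← hlen k, hMk, List.length_append, hT, Nat.add_sub_cancel_left]
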